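/- arXiv:1605.01039 — 2 statements merged into one kernel-verified Lean document; each statement's English description precedes it below -/
import Mathlib

section
/- Let T be a positively edge-weighted tree with base nodes v_1 and v_2, and square root embeddings Ψ_{v_1}, Ψ_{v_2} : V(T) → ℝ^{m-1} (with the same fixed ordering of edges). Then there exist a linear map R : ℝ^{m-1} → ℝ^{m-1}, given by negating the coordinates corresponding to edges on the path from v_1 to v_2 and fixing all other coordinates, and a vector a ∈ ℝ^{m-1}, such that Ψ_{v_1}(u) = R(Ψ_{v_2}(u)) + a for all nodes u of T. In particular, Ψ_{v_1} and Ψ_{v_2} differ by a Euclidean isometry. -/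
open SimpleGraph

/-- The unique path between two vertices of a tree, as a walk. -/
noncomputable def treePath {V : Type*} (G : SimpleGraph V) (hG : G.IsTree) (a b : V) :
    G.Walk a b :=
  (hG.existsUnique_path a b).choose

/-- The square root embedding with base node `v`: the coordinate of `Ψ_v u` at edge `e`
is `√(w e)` if `e` lies on the path from `v` to `u`, and `0` otherwise. -/
noncomputable def sqrtEmbed {V : Type*} [DecidableEq V] (G : SimpleGraph V) (hG : G.IsTree)
    [Fintype G.edgeSet] (w : Sym2 V → ℝ) (v u : V) : EuclideanSpace ℝ G.edgeSet :=
  WithLp.toLp 2 fun e => if (e : Sym2 V) ∈ (treePath G hG v u).edges then Real.sqrt (w e) else 0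

/-- The tree metric: sum of the weights of the edges on the unique path. -/
noncomputable def treeDist {V : Type*} (G : SimpleGraph V) (hG : G.IsTree)
    (w : Sym2 V → ℝ) (a b : V) : ℝ :=
  ((treePath G hG a b).edges.map w).sum

/-!
Deleting an edge `e` from a tree leaves two sides, and `e` lies on the path between two vertices
exactly when they are on different sides. Hence `e` is on both or neither of the paths from `v₁`
and from `v₂` to `u` unless `e` lies on the path from `v₁` to `v₂`: changing the base node
negates those coordinates and translates by `Ψ_{v₁}(v₂)`.
-/

namespace SimpleGraph

variable {V : Type*} {G : SimpleGraph V}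

theorem Connected.reachable_deleteEdges_left_or_right (hG : G.Connected) (x y z : V) :
    (G.deleteEdges {s(x, y)}).Reachable z x ∨ (G.deleteEdges {s(x, y)}).Reachable z y := by
  set H := G.deleteEdges {s(x, y)}
  suffices ∀ {z t : V}, G.Walk z t → H.Reachable t x ∨ H.Reachable t y →
      H.Reachable z x ∨ H.Reachable z y from this (hG.preconnected z x).some (.inl .rfl)
  intro z t p ht
  induction p with
  | nil => exact ht
  | @cons z c _ hzc _ ih =>
    by_cases he : s(z, c) = s(x, y)
    · rcases Sym2.eq_iff.mp he with ⟨rfl, -⟩ | ⟨rfl, -⟩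
      exacts [.inl .rfl, .inr .rfl]
    · have hzc' : H.Adj z c := by simp [H, hzc, he]
      exact (ih ht).imp hzc'.reachable.trans hzc'.reachable.trans

theorem Connected.reachable_deleteEdges_iff (hG : G.Connected) (x y a b : V) :
    (G.deleteEdges {s(x, y)}).Reachable a b ↔
      ((G.deleteEdges {s(x, y)}).Reachable a x ↔ (G.deleteEdges {s(x, y)}).Reachable b x) := by
  refine ⟨fun hab => ⟨hab.symm.trans, hab.trans⟩, fun h => ?_⟩
  by_cases hax : (G.deleteEdges {s(x, y)}).Reachable a x
  · exact hax.trans (h.mp hax).symm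
  · have hay := (hG.reachable_deleteEdges_left_or_right x y a).resolve_left hax
    have hby := (hG.reachable_deleteEdges_left_or_right x y b).resolve_left (mt h.mpr hax)
    exact hay.trans hby.symm

theorem treePath_eq (hG : G.IsTree) {a b : V} {p : G.Walk a b} (hp : p.IsPath) :
    treePath G hG a b = p :=
  ((hG.existsUnique_path a b).choose_spec.2 p hp).symm

theorem mem_edges_treePath_iff_not_reachable (hG : G.IsTree) (e : Sym2 V) (a b : V) :
    e ∈ (treePath G hG a b).edges ↔ ¬ (G.deleteEdges {e}).Reachable a b := by
  induction e with | h x y => ?_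
  rw [reachable_deleteEdges_iff_exists_walk, not_exists_not]
  refine ⟨fun he p => ?_, fun h => h _⟩
  classical
  rw [treePath_eq hG p.bypass_isPath] at he
  exact p.edges_bypass_subset_edges he

theorem mem_edges_treePath_iff_mem_edges_treePath (hG : G.IsTree) (e : Sym2 V) (a b c : V) :
    (e ∈ (treePath G hG a c).edges ↔ e ∈ (treePath G hG b c).edges) ↔
      e ∉ (treePath G hG a b).edges := by
  induction e with | h x y => ?_
  simp only [mem_edges_treePath_iff_not_reachable]
  have hsides := hG.connected.reachable_deleteEdges_iff x y
  rw [hsides a c, hsides b c, hsides a b]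
  tauto

end SimpleGraph

noncomputable def EuclideanSpace.negCoords {ι : Type*} [Fintype ι] (p : ι → Prop)
    [DecidablePred p] : EuclideanSpace ℝ ι ≃ₗᵢ[ℝ] EuclideanSpace ℝ ι :=
  .piLpCongrRight 2 fun i => if p i then .neg ℝ else .refl ℝ ℝ

theorem EuclideanSpace.negCoords_apply {ι : Type*} [Fintype ι] (p : ι → Prop)
    [DecidablePred p] (x : EuclideanSpace ℝ ι) (i : ι) :
    negCoords p x i = if p i then -x i else x i := by
  by_cases h : p i <;> simp [negCoords, h]

open SimpleGraph EuclideanSpace in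
theorem sqrtEmbed_eq_negCoords_add {V : Type*} [DecidableEq V] (G : SimpleGraph V)
    (hG : G.IsTree) [Fintype G.edgeSet] (w : Sym2 V → ℝ) (v₁ v₂ u : V) :
    sqrtEmbed G hG w v₁ u =
      negCoords (fun e : G.edgeSet => (e : Sym2 V) ∈ (treePath G hG v₁ v₂).edges)
        (sqrtEmbed G hG w v₂ u) + sqrtEmbed G hG w v₁ v₂ := by
  ext e
  have := mem_edges_treePath_iff_mem_edges_treePath hG e v₁ v₂ u
  simp only [sqrtEmbed, PiLp.add_apply, negCoords_apply]
  split_ifs <;> first | tauto | ring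

theorem sqrtEmbed_base_change_general {V : Type*} [DecidableEq V] (G : SimpleGraph V) (hG : G.IsTree)
    [Fintype G.edgeSet] (w : Sym2 V → ℝ) (v₁ v₂ : V) :
    ∃ (R : EuclideanSpace ℝ G.edgeSet →ₗ[ℝ] EuclideanSpace ℝ G.edgeSet)
      (a : EuclideanSpace ℝ G.edgeSet),
      (∀ (x : EuclideanSpace ℝ G.edgeSet) (e : G.edgeSet),
        R x e = if (e : Sym2 V) ∈ (treePath G hG v₁ v₂).edges then -(x e) else x e) ∧
      (∀ u : V, sqrtEmbed G hG w v₁ u = R (sqrtEmbed G hG w v₂ u) + a) ∧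
      (∀ u u' : V, dist (sqrtEmbed G hG w v₁ u) (sqrtEmbed G hG w v₁ u') =
        dist (sqrtEmbed G hG w v₂ u) (sqrtEmbed G hG w v₂ u')) := by
  set R := EuclideanSpace.negCoords fun e : G.edgeSet =>
    (e : Sym2 V) ∈ (treePath G hG v₁ v₂).edges
  refine ⟨R.toLinearMap, sqrtEmbed G hG w v₁ v₂, EuclideanSpace.negCoords_apply _,
    sqrtEmbed_eq_negCoords_add G hG w v₁ v₂, fun u u' => ?_⟩
  rw [sqrtEmbed_eq_negCoords_add G hG w v₁ v₂ u, sqrtEmbed_eq_negCoords_add G hG w v₁ v₂ u',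
    dist_add_right, R.dist_map]

/-- changing the base node from `v₂` to `v₁` changes the square root embedding
by the linear reflection `R` negating exactly the coordinates of edges on the path from `v₁`
to `v₂`, followed by a translation; in particular the two embeddings differ by a Euclidean
isometry. -/
theorem sqrtEmbed_base_change {V : Type*} [DecidableEq V] (G : SimpleGraph V) (hG : G.IsTree)
    [Fintype G.edgeSet] (w : Sym2 V → ℝ) (hw : ∀ e ∈ G.edgeSet, 0 < w e) (v₁ v₂ : V) :
    ∃ (R : EuclideanSpace ℝ G.edgeSet →ₗ[ℝ] EuclideanSpace ℝ G.edgeSet)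
      (a : EuclideanSpace ℝ G.edgeSet),
      (∀ (x : EuclideanSpace ℝ G.edgeSet) (e : G.edgeSet),
        R x e = if (e : Sym2 V) ∈ (treePath G hG v₁ v₂).edges then -(x e) else x e) ∧
      (∀ u : V, sqrtEmbed G hG w v₁ u = R (sqrtEmbed G hG w v₂ u) + a) ∧
      (∀ u u' : V, dist (sqrtEmbed G hG w v₁ u) (sqrtEmbed G hG w v₁ u') =
        dist (sqrtEmbed G hG w v₂ u) (sqrtEmbed G hG w v₂ u')) :=
  sqrtEmbed_base_change_general G hG w v₁ v₂
end

section
/- In fact (Ψ(v_1) - Ψ(w)) · (Ψ(v_2) - Ψ(w)) equals the total weight of the edges common to the path from w to v_1 and the path from w to v_2, i.e., the tree distance from w to the meeting point (median) of v_1, v_2, w. -/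
open SimpleGraph

/-! Removing an edge `e` of a tree leaves two sides, and a path uses `e` exactly
when its endpoints lie on different sides. Hence `e` lies on the path from `u` to `v₁` iff it
lies on exactly one of the paths from `v` to `u` and from `v` to `v₁`, so the `e`-th coordinate
of `Ψ v₁ - Ψ u` is `±√(w e)` or `0` according to whether `e` is on the path from `u` to `v₁`. -/

lemma treePath_isPath {V : Type*} (G : SimpleGraph V) (hG : G.IsTree) (a b : V) :
    (treePath G hG a b).IsPath :=
  (hG.existsUnique_path a b).choose_spec.1

namespace SimpleGraph

variable {V : Type*} {G : SimpleGraph V}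

lemma Walk.IsTrail.mem_edges_iff_not_reachable_iff {a b x z : V} {p : G.Walk x z}
    (hp : p.IsTrail) (hab : G.IsBridge s(a, b)) :
    s(a, b) ∈ p.edges ↔
      ¬((G.deleteEdges {s(a, b)}).Reachable a x ↔ (G.deleteEdges {s(a, b)}).Reachable a z) := by
  have hab' : ¬(G.deleteEdges {s(a, b)}).Reachable a b := isBridge_iff.mp hab
  constructor
  · intro he hxz
    by_cases hax : (G.deleteEdges {s(a, b)}).Reachable a x
    · have haz := hxz.mp hax
      refine hp.not_mem_edges_of_not_reachable (y := b) ?_ ?_ he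
      · exact fun hxb => hab' (hax.trans hxb)
      · exact fun hzb => hab' (haz.trans hzb)
    · have haz := mt hxz.mpr hax
      -- `x` and `z` are cut off from `a`: the first case with `a` and `b` exchanged
      rw [Sym2.eq_swap] at he hax haz
      exact hp.not_mem_edges_of_not_reachable (y := a) (mt Reachable.symm hax)
        (mt Reachable.symm haz) he
  · intro hxz
    refine p.mem_edges_of_not_reachable_deleteEdges fun h => hxz ?_
    exact ⟨fun hax => hax.trans h, fun haz => haz.trans h.symm⟩

lemma IsBridge.mem_edges_iff_xor {e : Sym2 V} (he : G.IsBridge e) {x y z : V}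
    {p : G.Walk x y} {q : G.Walk x z} {r : G.Walk y z}
    (hp : p.IsTrail) (hq : q.IsTrail) (hr : r.IsTrail) :
    e ∈ r.edges ↔ Xor (e ∈ p.edges) (e ∈ q.edges) := by
  obtain ⟨a, b⟩ := e
  rw [hp.mem_edges_iff_not_reachable_iff he, hq.mem_edges_iff_not_reachable_iff he,
    hr.mem_edges_iff_not_reachable_iff he, xor_iff_not_iff]
  tauto

end SimpleGraph

lemma ite_sub_ite_mul_ite_sub_ite {R : Type*} [Ring R] (P Q S : Prop) [Decidable P]
    [Decidable Q] [Decidable S] (c : R) :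
    ((if P then c else 0) - if S then c else 0) * ((if Q then c else 0) - if S then c else 0) =
      if Xor S P ∧ Xor S Q then c * c else 0 := by
  by_cases P <;> by_cases Q <;> by_cases S <;> simp_all

open RealInnerProductSpace in
/-- the dot product `(Ψ v₁ - Ψ u) ⬝ (Ψ v₂ - Ψ u)` equals the total weight of
the edges common to the path from `u` to `v₁` and the path from `u` to `v₂` (i.e., the tree
distance from `u` to the median of `v₁, v₂, u`). -/
theorem sqrtEmbed_inner_eq_common_weight {V : Type*} [DecidableEq V] (G : SimpleGraph V)
    (hG : G.IsTree) [Fintype G.edgeSet] (w : Sym2 V → ℝ) (hw : ∀ e ∈ G.edgeSet, 0 < w e)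
    (v v₁ v₂ u : V) :
    ⟪sqrtEmbed G hG w v v₁ - sqrtEmbed G hG w v u,
      sqrtEmbed G hG w v v₂ - sqrtEmbed G hG w v u⟫ =
    ∑ e : G.edgeSet, if (e : Sym2 V) ∈ (treePath G hG u v₁).edges ∧
        (e : Sym2 V) ∈ (treePath G hG u v₂).edges then w e else 0 := by
  rw [PiLp.inner_apply]
  refine Finset.sum_congr rfl fun ⟨e, he⟩ _ => ?_
  have hbridge : G.IsBridge e := isAcyclic_iff_forall_isBridge.mp hG.isAcyclic he
  have hpath (a b : V) : (treePath G hG a b).IsTrail := (treePath_isPath G hG a b).isTrail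
  simp only [hbridge.mem_edges_iff_xor (hpath v u) (hpath v v₁) (hpath u v₁),
    hbridge.mem_edges_iff_xor (hpath v u) (hpath v v₂) (hpath u v₂)]
  simp only [sqrtEmbed, PiLp.sub_apply, RCLike.inner_apply, conj_trivial]
  rw [mul_comm, ite_sub_ite_mul_ite_sub_ite, Real.mul_self_sqrt (hw e he).le]
end
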